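/- arXiv:1109.4959 — 2 statements merged into one kernel-verified Lean document; each statement's English description precedes it below -/
import Mathlib

section
/- Let a < b and u < w be real numbers and let F ⊆ [a,b] × [u,w] be a closed subset of ℝ² such that for every x₀ ∈ [a,b] the set { y : (x₀, y) ∈ F } is infinite. Then there exist a point p ∈ F, unit vectors e₁, e₂ ∈ ℝ² with e₁ ≠ e₂ and e₁ ≠ −e₂, and sequences (pₙ), (qₙ) in F \ {p} converging to p such that (pₙ − p)/‖pₙ − p‖ → e₁ and (qₙ − p)/‖qₙ − p‖ → e₂. (That is, F has a point at which its contingent is not contained in a line.) -/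
open Set Metric Filter Topology

noncomputable section

abbrev R2 := EuclideanSpace ℝ (Fin 2)

/-- `D` is a connected component of `S`. -/
def IsConnCompOf {X : Type*} [TopologicalSpace X] (S D : Set X) : Prop :=
  ∃ x ∈ S, connectedComponentIn S x = D

/-- `x` is a branching point of the level set `{f = c}`: it lies in the closure of at
least three distinct connected components of `{f ≠ c}`. -/
def IsBranchingPoint (f : R2 → ℝ) (c : ℝ) (x : R2) : Prop :=
  ∃ D₁ D₂ D₃ : Set R2, IsConnCompOf {y | f y ≠ c} D₁ ∧ IsConnCompOf {y | f y ≠ c} D₂ ∧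
    IsConnCompOf {y | f y ≠ c} D₃ ∧ D₁ ≠ D₂ ∧ D₁ ≠ D₃ ∧ D₂ ≠ D₃ ∧
    x ∈ closure D₁ ∧ x ∈ closure D₂ ∧ x ∈ closure D₃


open MeasureTheory Asymptotics

/-!
Suppose that at every point of `F` the contingent lies in a line. Each vertical fibre of `F` is
infinite and compact, so it has an accumulation point `p`; a vertical direction is contingent at
`p`, hence all of them are, i.e. the first coordinate has zero derivative within `F` at `p`.
Thus `[a,b]` is the projection of the set `T` of such points. Near each point of `T` the second
coordinate controls distances along `T`, so locally `T` is the graph over the `y`-axis of a function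
with zero derivative, whose image is null by Sard's lemma. Hence `[a,b]` would be null.
-/

def IsContingentDir {E : Type*} [NormedAddCommGroup E] [NormedSpace ℝ E] (F : Set E) (p e : E) :
    Prop :=
  ∃ s : ℕ → E, (∀ n, s n ∈ F \ {p}) ∧ Tendsto s atTop (𝓝 p) ∧
    Tendsto (fun n => ‖s n - p‖⁻¹ • (s n - p)) atTop (𝓝 e)

theorem exists_isContingentDir_mem_of_frequently {E : Type*} [NormedAddCommGroup E]
    [NormedSpace ℝ E] [ProperSpace E] {F K : Set E} {p : E} (hK : IsClosed K)
    (h : ∃ᶠ q in 𝓝[F \ {p}] p, ‖q - p‖⁻¹ • (q - p) ∈ K) :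
    ∃ e ∈ K, ‖e‖ = 1 ∧ IsContingentDir F p e := by
  obtain ⟨s, hs_tend, hs⟩ := exists_seq_forall_of_frequently (h.and_eventually self_mem_nhdsWithin)
  have hs_dir : ∀ n, ‖s n - p‖⁻¹ • (s n - p) ∈ sphere (0 : E) 1 ∩ K := fun n =>
    ⟨by simpa using norm_smul_inv_norm (𝕜 := ℝ) (sub_ne_zero.2 (hs n).2.2), (hs n).1⟩
  obtain ⟨e, ⟨he_sphere, heK⟩, φ, hφ, hφ_tend⟩ :=
    ((isCompact_sphere 0 1).inter_right hK).tendsto_subseq hs_dir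
  refine ⟨e, heK, by simpa using he_sphere, s ∘ φ, fun n => (hs (φ n)).2, ?_, hφ_tend⟩
  exact (tendsto_nhds_of_tendsto_nhdsWithin hs_tend).comp hφ.tendsto_atTop

theorem exists_isContingentDir_vertical {F : Set R2} (hF : IsClosed F) {x : ℝ}
    (hinf : {y : ℝ | (WithLp.toLp 2 ![x, y] : R2) ∈ F}.Infinite)
    (hbdd : Bornology.IsBounded {y : ℝ | (WithLp.toLp 2 ![x, y] : R2) ∈ F}) :
    ∃ p ∈ F, p 0 = x ∧ ∃ e : R2, ‖e‖ = 1 ∧ e 0 = 0 ∧ IsContingentDir F p e := by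
  set ι : ℝ → R2 := fun y => WithLp.toLp 2 ![x, y]
  have hι : Continuous ι := by fun_prop
  obtain ⟨y₀, hy₀, hacc⟩ :=
    hinf.exists_accPt_of_subset_isCompact hbdd.isCompact_closure subset_closure
  refine ⟨ι y₀, (hF.preimage hι).closure_subset hy₀, by simp [ι], ?_⟩
  have hfreq : ∃ᶠ q in 𝓝[F \ {ι y₀}] ι y₀, ‖q - ι y₀‖⁻¹ • (q - ι y₀) ∈ {v : R2 | v 0 = 0} := by
    rw [frequently_nhdsWithin_iff]
    refine (hι.tendsto y₀).frequently ((accPt_iff_frequently.1 hacc).mono ?_)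
    rintro y ⟨hne, hyF⟩
    refine ⟨by simp [ι], hyF, fun h => hne ?_⟩
    simpa [ι] using congrArg (· 1) h
  obtain ⟨e, he0, he, hdir⟩ :=
    exists_isContingentDir_mem_of_frequently (isClosed_eq (by fun_prop) continuous_const) hfreq
  exact ⟨e, he, he0, hdir⟩

theorem exists_isContingentDir_of_not_hasFDerivWithinAt {E : Type*} [NormedAddCommGroup E]
    [NormedSpace ℝ E] [ProperSpace E] {L : E →L[ℝ] ℝ} {F : Set E} {p : E}
    (h : ¬ HasFDerivWithinAt L (0 : E →L[ℝ] ℝ) F p) :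
    ∃ e : E, ‖e‖ = 1 ∧ L e ≠ 0 ∧ IsContingentDir F p e := by
  rw [hasFDerivWithinAt_iff_isLittleO, isLittleO_iff] at h
  push Not at h
  obtain ⟨c, hc, hfreq⟩ := h
  have hfreq' : ∃ᶠ q in 𝓝[F \ {p}] p, ‖q - p‖⁻¹ • (q - p) ∈ {v : E | c ≤ |L v|} := by
    rw [frequently_nhdsWithin_iff] at hfreq ⊢
    refine hfreq.mono fun q ⟨hlt, hqF⟩ => ?_
    simp only [zero_apply, sub_zero, Real.norm_eq_abs, ← map_sub] at hlt
    have hqp : 0 < ‖q - p‖ := by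
      by_contra! h0
      simp [norm_le_zero_iff.1 h0] at hlt
    refine ⟨?_, hqF, fun h => hqp.ne' (by simp [show q = p from h])⟩
    rw [mem_ofPred_eq, map_smul, smul_eq_mul, abs_mul, abs_inv, abs_norm, inv_mul_eq_div,
      le_div_iff₀ hqp]
    exact hlt.le
  obtain ⟨e, hce, he, hdir⟩ :=
    exists_isContingentDir_mem_of_frequently (isClosed_le continuous_const (by fun_prop)) hfreq'
  refine ⟨e, he, fun h0 => ?_, hdir⟩
  simp only [mem_ofPred_eq, h0, abs_zero] at hce
  linarith

theorem volume_image_eq_zero_of_hasFDerivWithinAt_zero {E : Type*} [NormedAddCommGroup E]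
    [NormedSpace ℝ E] {f g : E → ℝ} {A : Set E} {C : ℝ}
    (hf : ∀ p ∈ A, HasFDerivWithinAt f (0 : E →L[ℝ] ℝ) A p)
    (hg : ∀ p ∈ A, ∀ q ∈ A, ‖q - p‖ ≤ C * |g q - g p|) :
    volume (f '' A) = 0 := by
  set φ := Function.invFunOn g A
  have hinj : InjOn g A := fun p hp q hq hpq => by
    have := hg p hp q hq
    rw [hpq, sub_self, abs_zero, mul_zero, norm_le_zero_iff, sub_eq_zero] at this
    exact this.symm
  have hφA : ∀ y ∈ g '' A, φ y ∈ A := fun y hy => Function.invFunOn_mem hy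
  have hgφ : ∀ y ∈ g '' A, g (φ y) = y := fun y hy => Function.invFunOn_eq hy
  rw [← hinj.invFunOn_image subset_rfl, ← image_comp]
  refine addHaar_image_eq_zero_of_det_fderivWithin_eq_zero volume (f' := fun _ => 0)
    (fun y hy => ?_) (fun _ _ => by simp)
  have hφ_bigO : (fun y' => φ y' - φ y) =O[𝓝[g '' A] y] (fun y' => y' - y) := by
    refine isBigO_iff.2 ⟨C, eventually_nhdsWithin_of_forall fun y' hy' => ?_⟩
    simpa [hgφ y' hy', hgφ y hy] using hg (φ y) (hφA y hy) (φ y') (hφA y' hy')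
  have hφ_tend : Tendsto φ (𝓝[g '' A] y) (𝓝[A] (φ y)) := by
    refine tendsto_nhdsWithin_iff.2 ⟨?_, eventually_nhdsWithin_of_forall hφA⟩
    exact tendsto_sub_nhds_zero_iff.1 (hφ_bigO.trans_tendsto
      (tendsto_sub_nhds_zero_iff.2 (tendsto_id.mono_left nhdsWithin_le_nhds)))
  refine .of_isLittleO ?_
  simpa [Function.comp_def] using
    ((hf _ (hφA y hy)).isLittleO.comp_tendsto hφ_tend).trans_isBigO hφ_bigO

theorem norm_le_two_mul_abs_apply_one {v : R2} (h : |v 0| ≤ ‖v‖ / 2) : ‖v‖ ≤ 2 * |v 1| := by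
  have hsq : ‖v‖ ^ 2 = v 0 ^ 2 + v 1 ^ 2 := by
    simp [EuclideanSpace.real_norm_sq_eq, Fin.sum_univ_two]
  nlinarith [sq_abs (v 0), sq_abs (v 1), abs_nonneg (v 0), abs_nonneg (v 1), norm_nonneg v]

theorem volume_image_apply_zero_eq_zero_of_hasFDerivWithinAt {T : Set R2}
    (hT : ∀ p ∈ T, HasFDerivWithinAt (fun q : R2 => q 0) (0 : R2 →L[ℝ] ℝ) T p) :
    volume ((fun q : R2 => q 0) '' T) = 0 := by
  -- a uniform radius lets the cone estimate at one point of `Tm m` serve any nearby point of it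
  set Tm : ℕ → Set R2 := fun m =>
    {p ∈ T | ∀ q ∈ T, dist q p < 1 / (m + 1) → |q 0 - p 0| ≤ ‖q - p‖ / 2}
  have hcover : T ⊆ ⋃ m, Tm m := by
    intro p hp
    have := isLittleO_iff.1 (hT p hp).isLittleO (c := 1 / 2) (by norm_num)
    obtain ⟨ε, hε, hball⟩ := Metric.eventually_nhds_iff.1 (eventually_nhdsWithin_iff.1 this)
    obtain ⟨m, hm⟩ := exists_nat_one_div_lt hε
    refine mem_iUnion.2 ⟨m, hp, fun q hq hqp => ?_⟩
    have := hball (hqp.trans hm) hq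
    simp only [zero_apply, sub_zero, Real.norm_eq_abs] at this
    linarith
  refine measure_mono_null (image_mono hcover) ?_
  rw [image_iUnion]
  refine measure_iUnion_null fun m => ?_
  have hρ : (0 : ℝ) < 1 / (2 * (m + 1)) := by positivity
  suffices ∀ p ∈ Tm m, ∃ U ∈ 𝓝[Tm m] p, volume ((fun q : R2 => q 0) '' U) = 0 by
    simpa using measure_null_of_locally_null
      (μ := OuterMeasure.comap (fun q : R2 => q 0) volume.toOuterMeasure) (Tm m) this
  intro p hp
  refine ⟨Tm m ∩ ball p (1 / (2 * (m + 1))), inter_mem_nhdsWithin _ (ball_mem_nhds p hρ),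
    volume_image_eq_zero_of_hasFDerivWithinAt_zero (g := fun q : R2 => q 1) (C := 2)
      (fun q hq => (hT q hq.1.1).mono fun r hr => hr.1.1) fun q hq r hr => ?_⟩
  refine norm_le_two_mul_abs_apply_one (hq.1.2 r hr.1.1 ?_)
  have hrq := dist_triangle_right r q p
  have : 1 / (2 * ((m : ℝ) + 1)) + 1 / (2 * (m + 1)) = 1 / (m + 1) := by field_simp; ring
  linarith [mem_ball.1 hq.2, mem_ball.1 hr.2]

theorem exists_point_contingent_not_in_line_general
    (a b u w : ℝ) (hab : a < b) (F : Set R2) (hF : IsClosed F)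
    (hsub : F ⊆ {p : R2 | a ≤ p 0 ∧ p 0 ≤ b ∧ u ≤ p 1 ∧ p 1 ≤ w})
    (hinf : ∀ x₀ ∈ Set.Icc a b, {y : ℝ | (WithLp.toLp 2 ![x₀, y] : R2) ∈ F}.Infinite) :
    ∃ p ∈ F, ∃ e₁ e₂ : R2, ‖e₁‖ = 1 ∧ ‖e₂‖ = 1 ∧ e₁ ≠ e₂ ∧ e₁ ≠ -e₂ ∧
      ∃ pseq qseq : ℕ → R2,
        (∀ n, pseq n ∈ F \ {p}) ∧ (∀ n, qseq n ∈ F \ {p}) ∧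
        Tendsto pseq atTop (𝓝 p) ∧ Tendsto qseq atTop (𝓝 p) ∧
        Tendsto (fun n => (‖pseq n - p‖)⁻¹ • (pseq n - p)) atTop (𝓝 e₁) ∧
        Tendsto (fun n => (‖qseq n - p‖)⁻¹ • (qseq n - p)) atTop (𝓝 e₂) := by
  by_contra hcon
  set T := {p ∈ F | HasFDerivWithinAt (EuclideanSpace.proj 0 : R2 →L[ℝ] ℝ) (0 : R2 →L[ℝ] ℝ) F p}
  have hcover : Icc a b ⊆ (fun q : R2 => q 0) '' T := by
    intro x hx
    have hbdd : Bornology.IsBounded {y : ℝ | (WithLp.toLp 2 ![x, y] : R2) ∈ F} :=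
      Metric.isBounded_Icc u w |>.subset fun y hy => by simpa using (hsub hy).2.2
    obtain ⟨p, hpF, rfl, e₁, he₁, he₁0, s, hs, hs_tend, hs_dir⟩ :=
      exists_isContingentDir_vertical hF (hinf x hx) hbdd
    refine ⟨p, ⟨hpF, by_contra fun hp => ?_⟩, rfl⟩
    obtain ⟨e₂, he₂, he₂0, t, ht, ht_tend, ht_dir⟩ :=
      exists_isContingentDir_of_not_hasFDerivWithinAt hp
    refine hcon ⟨p, hpF, e₁, e₂, he₁, he₂, fun h => he₂0 ?_, fun h => he₂0 ?_,
      s, t, hs, ht, hs_tend, ht_tend, hs_dir, ht_dir⟩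
    · simpa [h] using he₁0
    · simpa [h] using he₁0
  have hnull := measure_mono_null hcover
    (volume_image_apply_zero_eq_zero_of_hasFDerivWithinAt fun p hp => hp.2.mono (sep_subset _ _))
  rw [Real.volume_Icc, ENNReal.ofReal_eq_zero] at hnull
  linarith

/-- If a closed subset `F` of the rectangle `[a,b] × [u,w]` has infinitely many points on
every vertical line meeting the rectangle, then there is a point of `F` at which the
contingent of `F` is not contained in a line: two distinct, non-opposite unit directions
are both attained as limits of directions towards points of `F`. -/
theorem exists_point_contingent_not_in_line
    (a b u w : ℝ) (hab : a < b) (huw : u < w) (F : Set R2) (hF : IsClosed F)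
    (hsub : F ⊆ {p : R2 | a ≤ p 0 ∧ p 0 ≤ b ∧ u ≤ p 1 ∧ p 1 ≤ w})
    (hinf : ∀ x₀ ∈ Set.Icc a b, {y : ℝ | (WithLp.toLp 2 ![x₀, y] : R2) ∈ F}.Infinite) :
    ∃ p ∈ F, ∃ e₁ e₂ : R2, ‖e₁‖ = 1 ∧ ‖e₂‖ = 1 ∧ e₁ ≠ e₂ ∧ e₁ ≠ -e₂ ∧
      ∃ pseq qseq : ℕ → R2,
        (∀ n, pseq n ∈ F \ {p}) ∧ (∀ n, qseq n ∈ F \ {p}) ∧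
        Tendsto pseq atTop (𝓝 p) ∧ Tendsto qseq atTop (𝓝 p) ∧
        Tendsto (fun n => (‖pseq n - p‖)⁻¹ • (pseq n - p)) atTop (𝓝 e₁) ∧
        Tendsto (fun n => (‖qseq n - p‖)⁻¹ • (qseq n - p)) atTop (𝓝 e₂) :=
  exists_point_contingent_not_in_line_general a b u w hab F hF hsub hinf
end
end

section
/- Let D be a connected component of {f ≠ c}. Then ∂D ∪ {∞} is a connected subset of S². -/
open Set Metric Filter Topology

noncomputable section

/-!
Say `f > c` on `D` (otherwise replace `f` by `-f`); then `f = c` on `∂D`. Since `f` has no local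
extrema, `D` is unbounded (a maximum of `f` on `closure D` would lie in `D`), and no nonempty
compact subset of `Dᶜ` is relatively open in `Dᶜ` (a minimum of `f` on it would be a local
minimum). If `∂D ∪ {∞}` split, the part avoiding `∞` would be a nonempty compact `V ⊆ ∂D`, open and
closed in `∂D`. For `B` the complement of a ball containing `V`, the closed sets `closure D ∪ B` and
`Dᶜ ∪ B` are then connected and cover the plane, so by unicoherence of the plane their
intersection `∂D ∪ B` is connected; but `V` is a nonempty clopen part of it missing `B`.
-/

open Real

section Unicoherence

variable {X : Type*} [TopologicalSpace X]

theorem IsPreconnected.sub_eq_sub_of_circleExp_eq {s : Set X} (hs : IsPreconnected s)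
    {a b : X → ℝ} (ha : ContinuousOn a s) (hb : ContinuousOn b s)
    (hab : ∀ x ∈ s, Circle.exp (a x) = Circle.exp (b x)) {x y : X} (hx : x ∈ s) (hy : y ∈ s) :
    a x - b x = a y - b y := by
  refine hs.constant_of_mapsTo (T := (AddSubgroup.zmultiples (2 * π) : Set ℝ))
    (isDiscrete_iff_discreteTopology.mpr
      (inferInstanceAs (DiscreteTopology (AddSubgroup.zmultiples (2 * π)))))
    (ha.sub hb) (fun z hz => ?_) hx hy
  have : Circle.exp (a z - b z) = 1 := by rw [Circle.exp_sub, hab z hz, div_self']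
  obtain ⟨n, hn⟩ := Circle.exp_eq_one.mp this
  exact AddSubgroup.mem_zmultiples_iff.mpr ⟨n, by simp [hn]⟩

theorem exists_continuous_circleExp_eq [SimplyConnectedSpace X] [LocallyPathConnectedSpace X]
    {φ : X → Circle} (hφ : Continuous φ) :
    ∃ h : X → ℝ, Continuous h ∧ ∀ x, Circle.exp (h x) = φ x := by
  obtain ⟨x₀⟩ : Nonempty X := inferInstance
  obtain ⟨h, -, hh⟩ := (Circle.isCoveringMap_exp.existsUnique_continuousMap_lifts ⟨φ, hφ⟩ x₀
    _ (Circle.exp_arg (φ x₀))).exists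
  exact ⟨h, h.continuous, congrFun hh⟩

/-- Unicoherence. If `F₁ ∩ F₂` split, a Urysohn function `g` for the two parts would make
`exp (iπg)` on `F₁` and `exp (-iπg)` on `F₂` one continuous circle-valued map, and its real lift
`h` would satisfy `h - πg` constant on `F₁` and `h + πg` constant on `F₂`, which is impossible. -/
theorem IsPreconnected.inter_of_union_eq_univ [NormalSpace X] [SimplyConnectedSpace X]
    [LocallyPathConnectedSpace X] {F₁ F₂ : Set X} (hc₁ : IsPreconnected F₁)
    (hc₂ : IsPreconnected F₂) (h₁ : IsClosed F₁) (h₂ : IsClosed F₂) (hu : F₁ ∪ F₂ = univ) :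
    IsPreconnected (F₁ ∩ F₂) := by
  classical
  rw [isPreconnected_iff_subset_of_fully_disjoint_closed (h₁.inter h₂)]
  intro u v hu_cl hv_cl huv hd
  by_contra! hne
  obtain ⟨k₁, hk₁, hk₁v⟩ := not_subset.mp hne.2
  obtain ⟨k₂, hk₂, hk₂u⟩ := not_subset.mp hne.1
  have hk₁u : k₁ ∈ u := (huv hk₁).resolve_right hk₁v
  have hk₂v : k₂ ∈ v := (huv hk₂).resolve_left hk₂u
  obtain ⟨g, hg₀, hg₁, -⟩ := exists_continuous_zero_one_of_isClosed hu_cl hv_cl hd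
  have hglue : ∀ x ∈ F₁ ∩ F₂, Circle.exp (π * g x) = Circle.exp (-(π * g x)) := by
    intro x hx
    rcases huv hx with hxu | hxv
    · simp [hg₀ hxu]
    · rw [hg₁ hxv, Pi.one_apply, mul_one, ← Circle.exp_sub_two_pi]
      ring_nf
  have hfr : frontier F₁ ⊆ F₁ ∩ F₂ := by
    intro x hx
    have hcompl : F₁ᶜ ⊆ F₂ := fun y hy => (hu ▸ mem_univ y : y ∈ F₁ ∪ F₂).resolve_left hy
    refine ⟨h₁.frontier_subset hx, closure_minimal hcompl h₂ ?_⟩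
    exact frontier_subset_closure (by rwa [frontier_compl])
  obtain ⟨h, hc, hh⟩ := exists_continuous_circleExp_eq (φ := F₁.piecewise
    (fun x => Circle.exp (π * g x)) (fun x => Circle.exp (-(π * g x))))
    (Continuous.piecewise (fun x hx => hglue x (hfr hx)) (by fun_prop) (by fun_prop))
  have e₁ := hc₁.sub_eq_sub_of_circleExp_eq (b := fun x => π * g x) hc.continuousOn
    (by fun_prop) (fun x hx => by rw [hh, piecewise_eq_of_mem _ _ _ hx]) hk₁.1 hk₂.1
  have e₂ := hc₂.sub_eq_sub_of_circleExp_eq (b := fun x => -(π * g x)) hc.continuousOn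
    (by fun_prop) (fun x hx => by
      by_cases hx₁ : x ∈ F₁
      · rw [hh, piecewise_eq_of_mem _ _ _ hx₁, hglue x ⟨hx₁, hx⟩]
      · rw [hh, piecewise_eq_of_notMem _ _ _ hx₁]) hk₁.2 hk₂.2
  simp only [hg₀ hk₁u, hg₁ hk₂v, Pi.zero_apply, Pi.one_apply] at e₁ e₂
  linarith [pi_pos]

end Unicoherence

namespace OnePoint

theorem isConnected_image_coe_union_infty {X : Type*} [TopologicalSpace X] {S : Set X}
    (hS : IsClosed S) (h : ∀ V ⊆ S, IsCompact V → IsClosed (S \ V) → V = ∅) :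
    IsConnected (((↑) : X → OnePoint X) '' S ∪ {∞}) := by
  refine ⟨⟨∞, Or.inr rfl⟩, ?_⟩
  have key : ∀ u v : Set (OnePoint X), IsClosed u → IsClosed v →
      (↑) '' S ∪ {∞} ⊆ u ∪ v → ((↑) '' S ∪ {∞}) ∩ (u ∩ v) = ∅ → ∞ ∉ u →
      (↑) '' S ∪ {∞} ⊆ v := by
    intro u v hu hv huv huv' hinf
    have hSuv : ∀ x ∈ S, (x : OnePoint X) ∈ u → (x : OnePoint X) ∉ v := fun x hx hxu hxv =>
      (eq_empty_iff_forall_notMem.mp huv') x ⟨Or.inl ⟨x, hx, rfl⟩, hxu, hxv⟩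
    have hV : S ∩ (↑) ⁻¹' u = ∅ := by
      refine h _ inter_subset_left (((isClosed_iff_of_notMem hinf).mp hu).2.inter_left hS) ?_
      have : S \ (S ∩ (↑) ⁻¹' u) = S ∩ (↑) ⁻¹' v := by
        ext x
        refine ⟨fun hx => ⟨hx.1, ?_⟩, fun hx => ⟨hx.1, fun hxu => hSuv x hx.1 hxu.2 hx.2⟩⟩
        exact (huv (Or.inl ⟨x, hx.1, rfl⟩)).resolve_left fun hxu => hx.2 ⟨hx.1, hxu⟩
      rw [this]
      exact hS.inter (hv.preimage continuous_coe)
    rintro _ (⟨x, hx, rfl⟩ | rfl)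
    · exact (huv (Or.inl ⟨x, hx, rfl⟩)).resolve_left fun hxu =>
        (eq_empty_iff_forall_notMem.mp hV) x ⟨hx, hxu⟩
    · exact (huv (Or.inr rfl)).resolve_left hinf
  rw [isPreconnected_iff_subset_of_disjoint_closed]
  intro u v hu hv huv huv'
  by_cases hinf : ∞ ∈ u
  · refine Or.inl (key v u hv hu (union_comm u v ▸ huv) (inter_comm u v ▸ huv') fun hinf' => ?_)
    exact (eq_empty_iff_forall_notMem.mp huv') ∞ ⟨Or.inr rfl, hinf, hinf'⟩
  · exact Or.inr (key u v hu hv huv huv' hinf)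

end OnePoint

theorem frontier_connectedComponentIn_subset_compl {X : Type*} [TopologicalSpace X]
    [LocallyConnectedSpace X] {S : Set X} (hS : IsOpen S) (x : X) :
    frontier (connectedComponentIn S x) ⊆ Sᶜ := by
  intro z hz hzS
  rw [hS.connectedComponentIn.frontier_eq] at hz
  obtain ⟨y, hyz, hyx⟩ := _root_.mem_closure_iff.mp hz.1 _ hS.connectedComponentIn
    (mem_connectedComponentIn hzS)
  refine hz.2 ?_
  rw [connectedComponentIn_eq hyx, ← connectedComponentIn_eq hyz]
  exact mem_connectedComponentIn hzS

theorem IsPreconnected.lt_of_forall_ne {X : Type*} [TopologicalSpace X] {s : Set X}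
    (hs : IsPreconnected s) {f : X → ℝ} (hf : ContinuousOn f s) {c : ℝ} (hne : ∀ x ∈ s, f x ≠ c)
    {a x : X} (ha : a ∈ s) (hca : c < f a) (hx : x ∈ s) : c < f x := by
  by_contra! h
  obtain ⟨y, hy, hyc⟩ := hs.intermediate_value hx ha hf ⟨h, hca.le⟩
  exact hne y hy hyc

section NoLocalExtr

variable {X : Type*} {f : X → ℝ} {c : ℝ} {D : Set X}

theorem diff_eq_empty_of_isCompact_diff [TopologicalSpace X] (hf : Continuous f)
    (hmin : ∀ x, ¬IsLocalMin f x) (hD : ∀ x ∈ D, c < f x) (hfr : ∀ x ∈ frontier D, f x ≤ c)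
    {W : Set X} (hW : IsOpen W) (hK : IsCompact (W \ D)) : W \ D = ∅ := by
  by_contra hne
  obtain ⟨p, hp, hpmin⟩ := hK.exists_isMinOn (nonempty_iff_ne_empty.mpr hne) hf.continuousOn
  refine hmin p ?_
  by_cases hpD : p ∈ closure D
  · have hpc : f p ≤ c := hfr p ⟨hpD, fun h => hp.2 (interior_subset h)⟩
    filter_upwards [hW.mem_nhds hp.1] with y hy
    by_cases hyD : y ∈ D
    · exact hpc.trans (hD y hyD).le
    · exact hpmin ⟨hy, hyD⟩
  · filter_upwards [hW.mem_nhds hp.1, isClosed_closure.isOpen_compl.mem_nhds hpD] with y hy hyD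
    exact hpmin ⟨hy, fun h => hyD (subset_closure h)⟩

variable [PseudoMetricSpace X] [ProperSpace X]

theorem not_isBounded_of_forall_frontier_le (hf : Continuous f) (hmax : ∀ x, ¬IsLocalMax f x)
    (hDo : IsOpen D) (hDne : D.Nonempty) (hD : ∀ x ∈ D, c < f x)
    (hfr : ∀ x ∈ frontier D, f x ≤ c) : ¬Bornology.IsBounded D := by
  intro hb
  obtain ⟨x₀, hx₀⟩ := hDne
  obtain ⟨z, hz, hzmax⟩ :=
    hb.isCompact_closure.exists_isMaxOn ⟨x₀, subset_closure hx₀⟩ hf.continuousOn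
  have hzD : z ∈ D := by
    by_contra hzD
    have hzc := hfr z ⟨hz, by rwa [hDo.interior_eq]⟩
    have hx₀z : f x₀ ≤ f z := hzmax (subset_closure hx₀)
    linarith [hD x₀ hx₀]
  exact hmax z ((hzmax.on_subset subset_closure).isLocalMax (hDo.mem_nhds hzD))

theorem isPreconnected_compl_union (hf : Continuous f) (hmin : ∀ x, ¬IsLocalMin f x)
    (hDo : IsOpen D) (hD : ∀ x ∈ D, c < f x) (hfr : ∀ x ∈ frontier D, f x ≤ c) {B : Set X}
    (hB : IsPreconnected B) (hBc : IsClosed B) (hBb : Bornology.IsBounded Bᶜ) :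
    IsPreconnected (Dᶜ ∪ B) := by
  have key : ∀ u v : Set X, IsClosed u → IsClosed v → Dᶜ ∪ B ⊆ u ∪ v → Disjoint u v →
      B ⊆ v → Dᶜ ∪ B ⊆ v := by
    intro u v hu hv huv hd hBv
    have hW : vᶜ \ D = u \ D := by
      ext x
      refine ⟨fun hx => ⟨(huv (Or.inl hx.2)).resolve_right hx.1, hx.2⟩,
        fun hx => ⟨hd.notMem_of_mem_left hx.1, hx.2⟩⟩
    have hK : IsCompact (u \ D) := Metric.isCompact_of_isClosed_isBounded (hu.sdiff hDo)
      (hBb.subset fun x hx hxB => hd.notMem_of_mem_left hx.1 (hBv hxB))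
    have hempty : u \ D = ∅ :=
      hW ▸ diff_eq_empty_of_isCompact_diff hf hmin hD hfr hv.isOpen_compl (hW ▸ hK)
    rintro x (hxD | hxB)
    · exact (huv (Or.inl hxD)).resolve_left fun hxu =>
        (eq_empty_iff_forall_notMem.mp hempty) x ⟨hxu, hxD⟩
    · exact hBv hxB
  rw [isPreconnected_iff_subset_of_fully_disjoint_closed (hDo.isClosed_compl.union hBc)]
  intro u v hu hv huv hd
  rcases (isPreconnected_iff_subset_of_fully_disjoint_closed hBc).mp hB u v hu hv
    (subset_union_right.trans huv) hd with hBu | hBv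
  · exact Or.inl (key v u hv hu (union_comm u v ▸ huv) hd.symm hBu)
  · exact Or.inr (key u v hu hv huv hd hBv)

end NoLocalExtr

theorem isPreconnected_compl_ball {E : Type*} [NormedAddCommGroup E] [NormedSpace ℝ E]
    (hE : 1 < Module.rank ℝ E) {R : ℝ} (hR : 0 < R) : IsPreconnected (ball (0 : E) R)ᶜ := by
  have : (ball (0 : E) R)ᶜ = (fun p : ℝ × E => p.1 • p.2) '' (Ici 1 ×ˢ sphere 0 R) := by
    ext x
    simp only [mem_compl_iff, mem_ball, dist_zero_right, not_lt, mem_image, mem_prod, mem_Ici,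
      mem_sphere_iff_norm, sub_zero, Prod.exists]
    constructor
    · intro hx
      have hx₀ : ‖x‖ ≠ 0 := (hR.trans_le hx).ne'
      refine ⟨‖x‖ / R, (R / ‖x‖) • x, ⟨(one_le_div hR).mpr hx, ?_⟩, ?_⟩
      · rw [norm_smul, Real.norm_of_nonneg (by positivity), div_mul_cancel₀ _ hx₀]
      · rw [smul_smul, div_mul_div_cancel₀ hR.ne', div_self hx₀, one_smul]
    · rintro ⟨t, v, ⟨ht, hv⟩, rfl⟩
      rw [norm_smul, Real.norm_of_nonneg (by linarith), hv]
      nlinarith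
  rw [this]
  exact (isPreconnected_Ici.prod (isPreconnected_sphere hE 0 R)).image _
    continuous_smul.continuousOn

section LevelSet

variable {E : Type*} [NormedAddCommGroup E] [NormedSpace ℝ E] [ProperSpace E]
  {f : E → ℝ} {c : ℝ}

theorem eq_empty_of_subset_frontier_of_isClosed_diff (hE : 1 < Module.rank ℝ E)
    (hf : Continuous f) (hmax : ∀ x, ¬IsLocalMax f x) (hmin : ∀ x, ¬IsLocalMin f x)
    {D : Set E} (hDo : IsOpen D) (hDc : IsPreconnected D) (hDne : D.Nonempty)
    (hD : ∀ x ∈ D, c < f x) (hfr : ∀ x ∈ frontier D, f x ≤ c) {V : Set E}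
    (hVD : V ⊆ frontier D) (hV : IsCompact V) (hV' : IsClosed (frontier D \ V)) : V = ∅ := by
  obtain ⟨R, hR, hVR⟩ := hV.isBounded.subset_ball_lt 0 0
  set B := (ball (0 : E) R)ᶜ
  have hB : IsPreconnected B := isPreconnected_compl_ball hE hR
  have hBc : IsClosed B := isOpen_ball.isClosed_compl
  have hVB : Disjoint V B := disjoint_compl_right.mono_left hVR
  obtain ⟨d, hdD, hdB⟩ : (D ∩ B).Nonempty := by
    by_contra! h
    refine not_isBounded_of_forall_frontier_le hf hmax hDo hDne hD hfr
      ((isBounded_ball (x := 0) (r := R)).subset fun x hx => ?_)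
    by_contra hxB
    exact (eq_empty_iff_forall_notMem.mp h) x ⟨hx, hxB⟩
  have hF₁ : IsPreconnected (closure D ∪ B) :=
    hDc.closure.union d (subset_closure hdD) hdB hB
  have hF₂ : IsPreconnected (Dᶜ ∪ B) :=
    isPreconnected_compl_union hf hmin hDo hD hfr hB hBc (by simpa [B] using isBounded_ball)
  have hF := hF₁.inter_of_union_eq_univ hF₂ (isClosed_closure.union hBc)
    (hDo.isClosed_compl.union hBc) (eq_univ_of_forall fun x => by
      by_cases hx : x ∈ D
      exacts [Or.inl (Or.inl (subset_closure hx)), Or.inr (Or.inl hx)])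
  rw [← inter_union_distrib_right, ← sdiff_eq, ← hDo.frontier_eq,
    isPreconnected_iff_subset_of_fully_disjoint_closed (isClosed_frontier.union hBc)] at hF
  rcases hF V ((frontier D \ V) ∪ B) hV.isClosed (hV'.union hBc)
    (fun x hx => (em (x ∈ V)).imp_right fun hxV => hx.imp_left fun hxD => ⟨hxD, hxV⟩)
    (disjoint_union_right.mpr ⟨disjoint_sdiff_right, hVB⟩) with h | h
  · exact absurd (h (Or.inr hdB)) (hVB.notMem_of_mem_right hdB)
  · refine eq_empty_of_forall_notMem fun x hx => ?_
    rcases h (Or.inl (hVD hx)) with hx' | hx'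
    exacts [hx'.2 hx, hVB.notMem_of_mem_left hx hx']

theorem eq_empty_of_subset_frontier_connectedComponentIn (hE : 1 < Module.rank ℝ E)
    (hf : Continuous f) (hmax : ∀ x, ¬IsLocalMax f x) (hmin : ∀ x, ¬IsLocalMin f x)
    {x₀ : E} (hx₀ : f x₀ ≠ c) {V : Set E}
    (hVD : V ⊆ frontier (connectedComponentIn {y | f y ≠ c} x₀)) (hV : IsCompact V)
    (hV' : IsClosed (frontier (connectedComponentIn {y | f y ≠ c} x₀) \ V)) : V = ∅ := by
  have hS : IsOpen {y | f y ≠ c} := isOpen_ne_fun hf continuous_const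
  set D := connectedComponentIn {y | f y ≠ c} x₀
  have hDo : IsOpen D := hS.connectedComponentIn
  have hDc : IsPreconnected D := isPreconnected_connectedComponentIn
  have hx₀D : x₀ ∈ D := mem_connectedComponentIn hx₀
  have hDne : ∀ x ∈ D, f x ≠ c := fun x hx => connectedComponentIn_subset _ _ hx
  have hfr : ∀ x ∈ frontier D, f x = c := fun x hx =>
    not_not.mp (frontier_connectedComponentIn_subset_compl hS x₀ hx)
  rcases hx₀.lt_or_gt with hlt | hgt
  · refine eq_empty_of_subset_frontier_of_isClosed_diff (f := -f) (c := -c) hE hf.neg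
      (fun x hx => hmin x (by simpa using hx.neg)) (fun x hx => hmax x (by simpa using hx.neg))
      hDo hDc ⟨x₀, hx₀D⟩ (fun x hx => ?_) (fun x hx => by simp [hfr x hx]) hVD hV hV'
    exact hDc.lt_of_forall_ne hf.neg.continuousOn (fun y hy => by simpa using hDne y hy) hx₀D
      (by simpa using hlt) hx
  · exact eq_empty_of_subset_frontier_of_isClosed_diff hE hf hmax hmin hDo hDc ⟨x₀, hx₀D⟩
      (fun x hx => hDc.lt_of_forall_ne hf.continuousOn hDne hx₀D hgt hx)
      (fun x hx => (hfr x hx).le) hVD hV hV'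

end LevelSet

/-- For a connected component `D` of `{f ≠ c}`, the set `∂D ∪ {∞}` is a connected
subset of the one-point compactification `S² = ℝ² ∪ {∞}`. -/
theorem frontier_union_infty_connected
    (f : R2 → ℝ) (hf : Differentiable ℝ f) (hgrad : ∀ x, fderiv ℝ f x ≠ 0) (c : ℝ)
    (D : Set R2) (hD : IsConnCompOf {y | f y ≠ c} D) :
    IsConnected ((fun p : R2 => (p : OnePoint R2)) '' frontier D ∪ {OnePoint.infty}) := by
  have hE : 1 < Module.rank ℝ R2 := by
    rw [← Module.finrank_eq_rank, finrank_euclideanSpace_fin]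
    norm_num
  obtain ⟨x₀, hx₀, rfl⟩ := hD
  exact OnePoint.isConnected_image_coe_union_infty isClosed_frontier fun V hVD hV hV' =>
    eq_empty_of_subset_frontier_connectedComponentIn hE hf.continuous
      (fun x hx => hgrad x hx.fderiv_eq_zero) (fun x hx => hgrad x hx.fderiv_eq_zero)
      hx₀ hVD hV hV'
end
end
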